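/- Let u = (u_1,...,u_k) and v = (v_1,...,v_k) be vectors of weights in [0,1] with u_i ≤ v_i for all i, and let I be any ordering. Then μ_k(u, I) ≥ μ_k(v, I): the expected number of examined items in the cascade model is monotonically nonincreasing in each click probability. -/

import Mathlib

/-- Expected number of examined items in a cascade where the item pulled at position
`i ∈ {1,...,k}` has click probability `a i`. -/
noncomputable def cascadeMean (k : ℕ) (a : ℕ → ℝ) : ℝ :=
  (∑ i ∈ Finset.Icc 1 (k - 1), (i : ℝ) * a i * ∏ j ∈ Finset.Icc 1 (i - 1), (1 - a j)) +
    (k : ℝ) * ∏ j ∈ Finset.Icc 1 (k - 1), (1 - a j)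

lemma cascadeMean_eq (n : ℕ) (a : ℕ → ℝ) :
    cascadeMean (n + 1) a = ∑ m ∈ Finset.range (n + 1), ∏ j ∈ Finset.Icc 1 m, (1 - a j) := by
  induction n with
  | zero => simp [cascadeMean]
  | succ n ih =>
    have h1 : (1:ℕ) ≤ n + 1 := by omega
    rw [Finset.sum_range_succ, ← ih]
    unfold cascadeMean
    simp only [Nat.add_sub_cancel]
    rw [Finset.sum_Icc_succ_top h1, Finset.prod_Icc_succ_top h1]
    have : Finset.Icc 1 (n + 1 - 1) = Finset.Icc 1 n := by norm_num
    rw [this]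
    push_cast
    ring

/-- If `u i ≤ v i` pointwise (weights in `[0,1]`), then for any ordering
`I` the expected number of examined items under `u` is at least that under `v`. -/
theorem cascadeMean_antitone (k : ℕ) (hk : 1 ≤ k) (u v : ℕ → ℝ)
    (huv : ∀ i, 0 ≤ u i ∧ u i ≤ v i ∧ v i ≤ 1) (I : ℕ → ℕ) :
    cascadeMean k (fun i => v (I i)) ≤ cascadeMean k (fun i => u (I i)) := by
  obtain ⟨n, rfl⟩ : ∃ n, k = n + 1 := ⟨k - 1, by omega⟩
  rw [cascadeMean_eq, cascadeMean_eq]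
  apply Finset.sum_le_sum
  intro m _
  apply Finset.prod_le_prod
  · intro j _
    have := huv (I j); linarith [this.1, this.2.1, this.2.2]
  · intro j _
    have := huv (I j); linarith [this.2.1]
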